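/- arXiv:1506.02538 — 2 statements merged into one kernel-verified Lean document; each statement's English description precedes it below -/
import Mathlib

section
/- Let R be a complete local Noetherian ring, M a finitely generated torsion-free module over the Iwasawa algebra Λ = ℤ_p[[T]] such that multiplication by p is injective on M/TM. Then M is a free Λ-module. (More precisely: if M is Λ-torsion-free and M/TM has no p-torsion, and M is finitely generated over Λ, then M is free over Λ.) -/
/-!
Over `Λ/(X) ≅ ℤ_p`, a discrete valuation ring, injectivity of `p` makes `M/XM` torsion-free,
hence free. Lift a basis of `M/XM` to `M`: the lifts generate `M` by Nakayama, since `X` lies in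
the Jacobson radical; and since `X` is a nonzerodivisor on `M`, the coefficients of a relation
among the lifts are divisible by `X`, then by every power of `X`, so they vanish.
-/

open PowerSeries Submodule

section LiftingBases

variable {R M ι : Type*} [CommRing R] [AddCommGroup M] [Module R M]

theorem Submodule.span_range_eq_top_of_span_range_mkQ_eq_top [Module.Finite R M] {I : Ideal R}
    (hI : I ≤ Ideal.jacobson ⊥) {v : ι → M}
    (hv : span (R ⧸ I) (Set.range ((I • ⊤ : Submodule R M).mkQ ∘ v)) = ⊤) :
    span R (Set.range v) = ⊤ := by
  have hsup : I • ⊤ ⊔ span R (Set.range v) = ⊤ := by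
    rw [← map_mkQ_eq_top, map_span, ← Set.range_comp,
      ← restrictScalars_span R (R ⧸ I) Ideal.Quotient.mk_surjective, hv, restrictScalars_top]
  exact top_le_iff.mp <| le_of_le_smul_of_le_jacobson_bot Module.Finite.fg_top hI
    (by rw [sup_comm, hsup])

theorem linearIndependent_of_linearIndependent_mkQ [Fintype ι] {x : R}
    [IsHausdorff (Ideal.span {x}) R] (hreg : IsSMulRegular M x) {v : ι → M}
    (hv : LinearIndependent (R ⧸ Ideal.span {x})
      ((Ideal.span {x} • ⊤ : Submodule R M).mkQ ∘ v)) :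
    LinearIndependent R v := by
  have hdiv : ∀ g : ι → R, ∑ i, g i • v i = 0 →
      ∃ g' : ι → R, (∀ i, g i = x * g' i) ∧ ∑ i, g' i • v i = 0 := by
    intro g hg
    have hmk : ∀ i, Ideal.Quotient.mk (Ideal.span {x}) (g i) = 0 := by
      refine Fintype.linearIndependent_iff.mp hv _ ?_
      simp only [Function.comp_apply, ← Ideal.Quotient.algebraMap_eq, algebraMap_smul,
        ← map_smul, ← map_sum, hg, map_zero]
    choose g' hg' using fun i =>
      Ideal.mem_span_singleton'.mp (Ideal.Quotient.eq_zero_iff_mem.mp (hmk i))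
    refine ⟨g', fun i => by rw [← hg', mul_comm], hreg ?_⟩
    simp only [Finset.smul_sum, smul_smul, smul_zero]
    simpa only [mul_comm x, hg'] using hg
  have hpow : ∀ n (g : ι → R), ∑ i, g i • v i = 0 → ∀ i, g i ∈ Ideal.span {x} ^ n := by
    intro n
    induction n with
    | zero => simp
    | succ n ih =>
      intro g hg i
      obtain ⟨g', hgg', hg'⟩ := hdiv g hg
      rw [hgg', pow_succ']
      exact Ideal.mul_mem_mul (Ideal.mem_span_singleton_self x) (ih g' hg' i)
  refine Fintype.linearIndependent_iff.mpr fun g hg i =>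
    IsHausdorff.haus ‹_› (g i) fun n => ?_
  rw [SModEq.zero, smul_eq_mul, Ideal.mul_top]
  exact hpow n g hg i

theorem Module.free_of_free_quotient_span_singleton [Module.Finite R M] {x : R}
    (hx : x ∈ Ideal.jacobson ⊥) [IsHausdorff (Ideal.span {x}) R] (hreg : IsSMulRegular M x)
    [Module.Free (R ⧸ Ideal.span {x}) (M ⧸ (Ideal.span {x} • ⊤ : Submodule R M))] :
    Module.Free R M := by
  let b := Module.Free.chooseBasis (R ⧸ Ideal.span {x})
    (M ⧸ (Ideal.span {x} • ⊤ : Submodule R M))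
  choose v hv using fun i => (Ideal.span {x} • ⊤ : Submodule R M).mkQ_surjective (b i)
  have hvb : (Ideal.span {x} • ⊤ : Submodule R M).mkQ ∘ v = b := funext hv
  have hli : LinearIndependent R v :=
    linearIndependent_of_linearIndependent_mkQ hreg (hvb ▸ b.linearIndependent)
  have hspan : span R (Set.range v) = ⊤ :=
    span_range_eq_top_of_span_range_mkQ_eq_top
      (by rwa [Ideal.span_le, Set.singleton_subset_iff]) (hvb ▸ b.span_eq)
  exact Module.Free.of_basis (Module.Basis.mk hli hspan.ge)

end LiftingBases

theorem IsDiscreteValuationRing.noZeroSMulDivisors_of_isSMulRegular {S N : Type*} [CommRing S]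
    [IsDomain S] [IsDiscreteValuationRing S] [AddCommGroup N] [Module S N] {ϖ : S}
    (hϖ : Irreducible ϖ) (hreg : IsSMulRegular N ϖ) : NoZeroSMulDivisors S N := by
  refine ⟨fun {a y} h => or_iff_not_imp_left.mpr fun ha => ?_⟩
  obtain ⟨n, u, rfl⟩ := eq_unit_mul_pow_irreducible ha hϖ
  refine (hreg.pow n) ?_
  calc ϖ ^ n • y = (↑u⁻¹ * (↑u * ϖ ^ n)) • y := by rw [← mul_assoc, u.inv_mul, one_mul]
    _ = ϖ ^ n • 0 := by rw [mul_smul, h, smul_zero, smul_zero]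

namespace PowerSeries

variable {A : Type*} [CommRing A]

theorem X_mem_jacobson_bot : (X : A⟦X⟧) ∈ Ideal.jacobson ⊥ := by
  rw [Ideal.mem_jacobson_bot]
  intro y
  simp [isUnit_iff_constantCoeff]

instance isHausdorff_span_X : IsHausdorff (Ideal.span {(X : A⟦X⟧)}) A⟦X⟧ := by
  refine ⟨fun f hf => ext fun n => ?_⟩
  have hn := hf (n + 1)
  rw [SModEq.zero, smul_eq_mul, Ideal.mul_top, Ideal.span_singleton_pow,
    Ideal.mem_span_singleton, X_pow_dvd_iff] at hn
  exact hn n n.lt_succ_self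

theorem ker_constantCoeff : RingHom.ker (constantCoeff (R := A)) = Ideal.span {X} := by
  ext f
  rw [RingHom.mem_ker, Ideal.mem_span_singleton, X_dvd_iff]

noncomputable def quotientSpanXEquiv : A⟦X⟧ ⧸ Ideal.span {(X : A⟦X⟧)} ≃+* A :=
  (Ideal.quotEquivOfEq ker_constantCoeff.symm).trans
    (RingHom.quotientKerEquivOfSurjective (f := constantCoeff (R := A)) fun a => ⟨C a, constantCoeff_C a⟩)

end PowerSeries

/-- Let `Λ = ℤ_p[[T]]` and let `M` be a finitely generated `Λ`-module which is
`Λ`-torsion-free and such that multiplication by `p` is injective on `M/TM`.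
Then `M` is a free `Λ`-module. -/
theorem free_of_torsionFree_of_p_injective (p : ℕ) [Fact p.Prime]
    (M : Type*) [AddCommGroup M] [Module (PowerSeries ℤ_[p]) M]
    [Module.Finite (PowerSeries ℤ_[p]) M]
    [NoZeroSMulDivisors (PowerSeries ℤ_[p]) M]
    (hinj : Function.Injective fun x : M ⧸ (Ideal.span {(PowerSeries.X : PowerSeries ℤ_[p])} •
        (⊤ : Submodule (PowerSeries ℤ_[p]) M)) => ((p : PowerSeries ℤ_[p])) • x) :
    Module.Free (PowerSeries ℤ_[p]) M := by
  let e := quotientSpanXEquiv (A := ℤ_[p])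
  have : IsDomain (ℤ_[p]⟦X⟧ ⧸ Ideal.span {(X : ℤ_[p]⟦X⟧)}) := MulEquiv.isDomain _ e.toMulEquiv
  have := IsDiscreteValuationRing.RingEquivClass.isDiscreteValuationRing e.symm
  have hp : Irreducible (p : ℤ_[p]⟦X⟧ ⧸ Ideal.span {(X : ℤ_[p]⟦X⟧)}) := by
    rw [← map_natCast e.symm]
    exact (MulEquiv.irreducible_iff e.symm.toMulEquiv).mpr PadicInt.irreducible_p
  have hreg : IsSMulRegular (M ⧸ (Ideal.span {(X : ℤ_[p]⟦X⟧)} • ⊤ : Submodule ℤ_[p]⟦X⟧ M))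
      (p : ℤ_[p]⟦X⟧ ⧸ Ideal.span {(X : ℤ_[p]⟦X⟧)}) := by
    intro y z h
    apply hinj
    simpa only [Nat.cast_smul_eq_nsmul] using h
  have := IsDiscreteValuationRing.noZeroSMulDivisors_of_isSMulRegular hp hreg
  have : Module.Free (ℤ_[p]⟦X⟧ ⧸ Ideal.span {(X : ℤ_[p]⟦X⟧)})
      (M ⧸ (Ideal.span {(X : ℤ_[p]⟦X⟧)} • ⊤ : Submodule ℤ_[p]⟦X⟧ M)) :=
    Module.free_of_finite_type_torsion_free'
  exact Module.free_of_free_quotient_span_singleton X_mem_jacobson_bot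
    (IsSMulRegular.of_ne_zero X_ne_zero)
end

section
/- Let Λ = ℤ_p[[T]] and let X be a finitely generated Λ-module whose Pontryagin-dual-type embedding X ↪ Λ has cokernel M of finite cardinality. Let Λ⁺_{n,n'} = Λ/(ω⁺_n, p^{n'}) where ω⁺_n is a distinguished polynomial of degree d_n. Then the ratio #(X ⊗_Λ Λ⁺_{n,n'}) / #(Λ⁺_{n,n'}) is a power of p bounded independently of n and n'. -/
/-- A distinguished polynomial over `ℤ_p`: monic, with all non-leading coefficients
divisible by `p`. -/
def IsDistinguished (p : ℕ) [Fact p.Prime] (f : Polynomial ℤ_[p]) : Prop :=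
  f.Monic ∧ ∀ i < f.natDegree, f.coeff i ∈ Ideal.span {(p : ℤ_[p])}

/-!
Put `I = (ω⁺_n, p^{n'})` and `Y = ι(X)`, an ideal of index `m = #M`. Since `ι` identifies
`X / I X` with `Y / I Y`, we get `#(X / I X) · m = #(Λ / I Y)`. As `I Y ⊆ I` and `I` is generated
by two elements, `I / I Y` is a quotient of `(Λ / Y)²`, so `#(Λ / I) ≤ #(Λ / I Y) ≤ m² · #(Λ / I)`.
All these finite groups are `ℤ_p`-modules, hence have `p`-power order, and the ratio
`#(X / I X) / #(Λ / I)` is `p ^ j` with `|j| ≤ log_p m`. If `Λ / I` is infinite then so is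
`X / I X`, and both cardinalities are `0`.
-/

theorem PadicInt.exists_card_eq_pow (p : ℕ) [Fact p.Prime] (A : Type*) [Semiring A]
    [Algebra ℤ_[p] A] (G : Type*) [AddCommGroup G] [Module A G] [Finite G] :
    ∃ s : ℕ, Nat.card G = p ^ s := by
  let : Module ℤ_[p] G := Module.compHom G (algebraMap ℤ_[p] A)
  refine ⟨_, Nat.eq_prime_pow_of_unique_prime_dvd Nat.card_pos.ne' fun {q} hq hdvd => ?_⟩
  by_contra hqp
  have : Fact q.Prime := ⟨hq⟩
  obtain ⟨x, hx⟩ := exists_prime_addOrderOf_dvd_card' q hdvd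
  have hq_unit : IsUnit (q : ℤ_[p]) := isUnit_iff.mpr <| norm_natCast_eq_one_iff.mpr <|
    (Nat.coprime_primes Fact.out hq).mpr (Ne.symm hqp)
  have hx0 : x = 0 := hq_unit.smul_eq_zero.mp <| by
    rw [Nat.cast_smul_eq_nsmul, ← hx, addOrderOf_nsmul_eq_zero]
  rw [hx0, addOrderOf_zero] at hx
  exact hq.one_lt.ne hx

theorem Nat.exists_natAbs_le_cast_pow_eq_zpow_mul {p b c t : ℕ} (hp : 1 < p)
    (h₁ : p ^ b ≤ p ^ c * p ^ t) (h₂ : p ^ c * p ^ t ≤ (p ^ t) ^ 2 * p ^ b) :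
    ∃ j : ℤ, j.natAbs ≤ t ∧ ((p ^ c : ℕ) : ℚ) = (p : ℚ) ^ j * ((p ^ b : ℕ) : ℚ) := by
  rw [← pow_add, Nat.pow_le_pow_iff_right hp] at h₁
  rw [← pow_add, ← pow_mul, ← pow_add, Nat.pow_le_pow_iff_right hp] at h₂
  refine ⟨(c : ℤ) - b, by omega, ?_⟩
  have hp0 : (p : ℚ) ≠ 0 := by positivity
  push_cast
  rw [← zpow_natCast _ b, ← zpow_add₀ hp0, sub_add_cancel, zpow_natCast]

section

variable {R M N : Type*} [CommRing R] [AddCommGroup M] [Module R M] [AddCommGroup N] [Module R N]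

theorem card_quotient_smul_top_mul_card_quotient_range {f : M →ₗ[R] N}
    (hf : Function.Injective f) (I : Ideal R) :
    Nat.card (M ⧸ I • (⊤ : Submodule R M)) * Nat.card (N ⧸ LinearMap.range f) =
      Nat.card (N ⧸ I • LinearMap.range f) := by
  have h := AddSubgroup.index_map_of_injective (I • (⊤ : Submodule R M)).toAddSubgroup
    (f := (f : M →+ N)) hf
  rw [← Submodule.map_toAddSubgroup, Submodule.map_smul'', Submodule.map_top] at h
  exact h.symm

theorem Ideal.card_quotient_span_pair_smul_le (Y : Ideal R) [Finite (R ⧸ Y)] (a b : R) :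
    Nat.card (R ⧸ Ideal.span {a, b} • Y) ≤
      Nat.card (R ⧸ Y) ^ 2 * Nat.card (R ⧸ Ideal.span {a, b}) := by
  classical
  have h := Submodule.index_smul_le Y {a, b} (N := Ideal.span {a, b}) (by simp)
  rw [Ideal.smul_eq_mul, mul_comm, ← Ideal.smul_eq_mul] at h
  have : Finite (R ⧸ Y.toAddSubgroup) := ‹Finite (R ⧸ Y)›
  exact h.trans (Nat.mul_le_mul_right _ (Nat.pow_le_pow_right Nat.card_pos Finset.card_le_two))

theorem Ideal.finite_quotient_span_pair_smul (Y : Ideal R) [Finite (R ⧸ Y)] (a b : R)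
    [Finite (R ⧸ Ideal.span {a, b})] : Finite (R ⧸ Ideal.span {a, b} • Y) := by
  rw [Ideal.smul_eq_mul, mul_comm, ← Ideal.smul_eq_mul]
  exact Submodule.finite_quotient_smul Y (Submodule.fg_span (Set.toFinite _))

end

theorem PadicInt.exists_card_quotient_span_pair_smul_top_eq_zpow_mul (p : ℕ) [Fact p.Prime]
    {R M : Type*} [CommRing R] [Algebra ℤ_[p] R] [AddCommGroup M] [Module R M]
    {f : M →ₗ[R] R} (hf : Function.Injective f) [Finite (R ⧸ LinearMap.range f)] {t : ℕ}
    (ht : Nat.card (R ⧸ LinearMap.range f) = p ^ t) (a b : R) :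
    ∃ j : ℤ, j.natAbs ≤ t ∧
      (Nat.card (M ⧸ Ideal.span {a, b} • (⊤ : Submodule R M)) : ℚ) =
        (p : ℚ) ^ j * (Nat.card (R ⧸ Ideal.span {a, b}) : ℚ) := by
  set I : Ideal R := Ideal.span {a, b}
  have hcount := card_quotient_smul_top_mul_card_quotient_range hf I
  have hdvd : Nat.card (R ⧸ I) ∣ Nat.card (R ⧸ I • LinearMap.range f) :=
    AddSubgroup.index_dvd_of_le (Submodule.toAddSubgroup_mono Ideal.mul_le_left)
  have hle := Ideal.card_quotient_span_pair_smul_le (LinearMap.range f) a b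
  rw [ht] at hcount hle
  by_cases hI : Finite (R ⧸ I)
  · have := Ideal.finite_quotient_span_pair_smul (LinearMap.range f) a b
    have hge := Nat.le_of_dvd Nat.card_pos hdvd
    have : Finite (M ⧸ I • (⊤ : Submodule R M)) :=
      Nat.finite_of_card_ne_zero (left_ne_zero_of_mul (hcount ▸ Nat.card_pos.ne'))
    obtain ⟨c, hc⟩ := exists_card_eq_pow p R (M ⧸ I • (⊤ : Submodule R M))
    obtain ⟨e, he⟩ := exists_card_eq_pow p R (R ⧸ I)
    rw [← hcount] at hge hle
    rw [hc, he] at hge hle ⊢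
    exact Nat.exists_natAbs_le_cast_pow_eq_zpow_mul (Fact.out : p.Prime).one_lt hge hle
  · rw [not_finite_iff_infinite] at hI
    rw [Nat.card_eq_zero_of_infinite, zero_dvd_iff, ← hcount] at hdvd
    refine ⟨0, by simp, ?_⟩
    rw [(mul_eq_zero.mp hdvd).resolve_right (pow_ne_zero _ (Fact.out : p.Prime).ne_zero),
      Nat.card_eq_zero_of_infinite]
    simp

theorem card_ratio_bounded_general (p : ℕ) [Fact p.Prime]
    (X : Type*) [AddCommGroup X] [Module (PowerSeries ℤ_[p]) X]
    (ι : X →ₗ[PowerSeries ℤ_[p]] PowerSeries ℤ_[p]) (hι : Function.Injective ι)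
    (hcoker : Finite (PowerSeries ℤ_[p] ⧸ LinearMap.range ι))
    (ω : ℕ → Polynomial ℤ_[p]) :
    ∃ C : ℕ, ∀ n n' : ℕ, ∃ j : ℤ, j.natAbs ≤ C ∧
      (Nat.card (X ⧸ (Ideal.span {((ω n : PowerSeries ℤ_[p])), (p : PowerSeries ℤ_[p]) ^ n'} •
          (⊤ : Submodule (PowerSeries ℤ_[p]) X))) : ℚ) =
        (p : ℚ) ^ j * (Nat.card (PowerSeries ℤ_[p] ⧸
          Ideal.span {((ω n : PowerSeries ℤ_[p])), (p : PowerSeries ℤ_[p]) ^ n'}) : ℚ) := by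
  obtain ⟨t, ht⟩ :=
    PadicInt.exists_card_eq_pow p (PowerSeries ℤ_[p]) (PowerSeries ℤ_[p] ⧸ LinearMap.range ι)
  exact ⟨t, fun n n' => PadicInt.exists_card_quotient_span_pair_smul_top_eq_zpow_mul p hι ht _ _⟩

/-- Let `Λ = ℤ_p[[T]]` and `X` a finitely generated `Λ`-module embedding in `Λ` with
finite cokernel `M`.  For distinguished polynomials `ω⁺_n` and `Λ⁺_{n,n'} = Λ/(ω⁺_n, p^{n'})`,
the ratio `#(X ⊗_Λ Λ⁺_{n,n'}) / #(Λ⁺_{n,n'})` is a power of `p` bounded independently of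
`n` and `n'`. -/
theorem card_ratio_bounded (p : ℕ) [Fact p.Prime]
    (X : Type*) [AddCommGroup X] [Module (PowerSeries ℤ_[p]) X]
    [Module.Finite (PowerSeries ℤ_[p]) X]
    (ι : X →ₗ[PowerSeries ℤ_[p]] PowerSeries ℤ_[p]) (hι : Function.Injective ι)
    (hcoker : Finite (PowerSeries ℤ_[p] ⧸ LinearMap.range ι))
    (ω : ℕ → Polynomial ℤ_[p]) (hω : ∀ n, IsDistinguished p (ω n)) :
    ∃ C : ℕ, ∀ n n' : ℕ, ∃ j : ℤ, j.natAbs ≤ C ∧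
      (Nat.card (X ⧸ (Ideal.span {((ω n : PowerSeries ℤ_[p])), (p : PowerSeries ℤ_[p]) ^ n'} •
          (⊤ : Submodule (PowerSeries ℤ_[p]) X))) : ℚ) =
        (p : ℚ) ^ j * (Nat.card (PowerSeries ℤ_[p] ⧸
          Ideal.span {((ω n : PowerSeries ℤ_[p])), (p : PowerSeries ℤ_[p]) ^ n'}) : ℚ) :=
  card_ratio_bounded_general p X ι hι hcoker ω
end
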